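/- Let 0 < r ≤ B, and let h : [0,r] → ℝ be continuous, h(0)=0, strictly increasing, differentiable on (0,r) with s_h := sup_{0<t<r} h(t)/(t·h'(t)) < ∞. Then the function x ↦ x · ln(B·e^{s_h}/h⁻¹(x)) is increasing on [0, h(r)], where h⁻¹ is the inverse of h. -/

import Mathlib

/-!
Write `c = B e^s` and `g t = h t * log (c / t)`. Since `t ≤ B`, `log (c / t) ≥ s`, so the
hypothesis `h t ≤ s t h'(t)` gives `g'(t) = h'(t) log (c / t) - h t / t ≥ 0`: `g` is increasing
on `(0, r]`, and nonnegative there because `s ≥ h t / (t h'(t)) > 0`. On `(0, h r]` the function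
of the theorem is `g ∘ h⁻¹` with `h⁻¹` increasing, and it vanishes at `0`.
-/

open Real Set

lemma hasDerivAt_log_const_div {c t : ℝ} (hc : c ≠ 0) (ht : t ≠ 0) :
    HasDerivAt (fun u => log (c / u)) (-t⁻¹) t := by
  have hdiv : HasDerivAt (fun u => c / u) (-(c / t ^ 2)) t := by
    simpa [div_eq_mul_inv] using (hasDerivAt_inv ht).const_mul c
  convert hdiv.log (div_ne_zero hc ht) using 1
  field_simp

lemma le_log_mul_exp_div {B s t : ℝ} (ht : 0 < t) (htB : t ≤ B) :
    s ≤ log (B * exp s / t) := by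
  rw [mul_div_right_comm, log_mul (div_pos (ht.trans_le htB) ht).ne' (exp_pos s).ne', log_exp]
  have : 0 ≤ log (B / t) := log_nonneg ((one_le_div ht).2 htB)
  linarith

lemma monotoneOn_mul_log_div {h h' : ℝ → ℝ} {c r : ℝ} (hc : c ≠ 0)
    (hcont : ContinuousOn h (Ioc 0 r)) (hderiv : ∀ t ∈ Ioo 0 r, HasDerivAt h (h' t) t)
    (hle : ∀ t ∈ Ioo 0 r, h t ≤ t * h' t * log (c / t)) :
    MonotoneOn (fun t => h t * log (c / t)) (Ioc 0 r) := by
  have hg : ∀ t ∈ Ioo 0 r,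
      HasDerivAt (fun u => h u * log (c / u)) (h' t * log (c / t) + h t * -t⁻¹) t :=
    fun t ht => (hderiv t ht).mul (hasDerivAt_log_const_div hc ht.1.ne')
  refine monotoneOn_of_deriv_nonneg (convex_Ioc 0 r) ?_ ?_ ?_
  · exact hcont.mul (continuousOn_log.comp (continuousOn_const.div continuousOn_id
      fun t ht => ht.1.ne') fun t ht => div_ne_zero hc ht.1.ne')
  · rw [interior_Ioc]
    exact fun t ht => (hg t ht).differentiableAt.differentiableWithinAt
  · rw [interior_Ioc]
    intro t ht
    rw [(hg t ht).deriv, mul_neg, ← sub_eq_add_neg, sub_nonneg, ← div_eq_mul_inv,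
      div_le_iff₀ ht.1]
    linarith [hle t ht]

lemma monotoneOn_mul_log_mul_exp_div {h h' : ℝ → ℝ} {r B s : ℝ} (hB : 0 < B) (hrB : r ≤ B)
    (hcont : ContinuousOn h (Ioc 0 r)) (hderiv : ∀ t ∈ Ioo 0 r, HasDerivAt h (h' t) t)
    (hpos : ∀ t ∈ Ioo 0 r, 0 < h' t) (hsup : ∀ t ∈ Ioo 0 r, h t / (t * h' t) ≤ s) :
    MonotoneOn (fun t => h t * log (B * exp s / t)) (Ioc 0 r) := by
  refine monotoneOn_mul_log_div (mul_pos hB (exp_pos s)).ne' hcont hderiv fun t ht => ?_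
  have htpos : 0 < t * h' t := mul_pos ht.1 (hpos t ht)
  calc h t ≤ s * (t * h' t) := (div_le_iff₀ htpos).1 (hsup t ht)
    _ ≤ log (B * exp s / t) * (t * h' t) := by
      gcongr
      exact le_log_mul_exp_div ht.1 (ht.2.le.trans hrB)
    _ = t * h' t * log (B * exp s / t) := by ring

lemma StrictMonoOn.monotoneOn_of_rightInvOn {α β : Type*} [LinearOrder α] [Preorder β]
    {f : α → β} {g : β → α} {s : Set β} {t : Set α} (hf : StrictMonoOn f t)
    (hg : MapsTo g s t) (hfg : RightInvOn g f s) : MonotoneOn g s :=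
  fun x hx y hy hxy => (hf.le_iff_le (hg hx) (hg hy)).1 (by rwa [hfg hx, hfg hy])

theorem stmt_2_general (r B : ℝ) (hr : 0 < r) (hrB : r ≤ B) (h h' hinv : ℝ → ℝ) (s : ℝ)
    (hcont : ContinuousOn h (Set.Icc 0 r)) (h0 : h 0 = 0)
    (hmono : StrictMonoOn h (Set.Icc 0 r))
    (hderiv : ∀ t ∈ Set.Ioo 0 r, HasDerivAt h (h' t) t)
    (hpos : ∀ t ∈ Set.Ioo 0 r, 0 < h' t)
    (hsup : ∀ t ∈ Set.Ioo 0 r, h t / (t * h' t) ≤ s)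
    (hinv_mem : ∀ x ∈ Set.Icc 0 (h r), hinv x ∈ Set.Icc 0 r)
    (hinv_eq : ∀ x ∈ Set.Icc 0 (h r), h (hinv x) = x) :
    MonotoneOn (fun x => x * Real.log (B * Real.exp s / hinv x)) (Set.Icc 0 (h r)) := by
  have hs : 0 ≤ s := by
    have ht : r / 2 ∈ Ioo 0 r := ⟨by linarith, by linarith⟩
    have hh : 0 < h (r / 2) := h0 ▸ hmono (left_mem_Icc.2 hr.le) (Ioo_subset_Icc_self ht) ht.1
    exact (div_pos hh (mul_pos ht.1 (hpos _ ht))).le.trans (hsup _ ht)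
  have hg := monotoneOn_mul_log_mul_exp_div (hr.trans_le hrB) hrB
    (hcont.mono Ioc_subset_Icc_self) hderiv hpos hsup
  have hmaps : MapsTo hinv (Ioc 0 (h r)) (Ioc 0 r) := fun x hx => by
    obtain ⟨hinv_nonneg, hinv_le⟩ := hinv_mem x (Ioc_subset_Icc_self hx)
    refine ⟨hinv_nonneg.lt_of_ne fun hinv_zero => hx.1.ne ?_, hinv_le⟩
    rw [← hinv_eq x (Ioc_subset_Icc_self hx), ← hinv_zero, h0]
  have hF : MonotoneOn (fun x => x * log (B * exp s / hinv x)) (Ioc 0 (h r)) :=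
    (hg.comp (hmono.monotoneOn_of_rightInvOn (hinv_mem ·) hinv_eq |>.mono Ioc_subset_Icc_self)
      hmaps).congr fun x hx => by
        simp only [Function.comp_apply, hinv_eq x (Ioc_subset_Icc_self hx)]
  rw [← Ioc_insert_left (h0 ▸ hmono.monotoneOn (left_mem_Icc.2 hr.le) (right_mem_Icc.2 hr.le)
    hr.le)]
  refine monotoneOn_insert_iff.2 ⟨fun b hb hb0 => absurd hb.1 hb0.not_gt, fun b hb _ => ?_, hF⟩
  have hb_mem := hmaps hb
  simpa using mul_nonneg hb.1.le (hs.trans (le_log_mul_exp_div hb_mem.1 (hb_mem.2.trans hrB)))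

/-- If `0 < r ≤ B`, `h` is continuous and strictly increasing on `[0,r]`, `h 0 = 0`,
differentiable on `(0,r)` with positive derivative and `h t / (t * h' t) ≤ s`, and
`hinv` is the inverse of `h` mapping `[0, h r]` onto `[0,r]`, then
`x ↦ x * log (B * exp s / hinv x)` is increasing on `[0, h r]`. -/
theorem stmt_2 (r B : ℝ) (hr : 0 < r) (hrB : r ≤ B) (h h' hinv : ℝ → ℝ) (s : ℝ)
    (hcont : ContinuousOn h (Set.Icc 0 r)) (h0 : h 0 = 0)
    (hmono : StrictMonoOn h (Set.Icc 0 r))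
    (hderiv : ∀ t ∈ Set.Ioo 0 r, HasDerivAt h (h' t) t)
    (hpos : ∀ t ∈ Set.Ioo 0 r, 0 < h' t)
    (hsup : ∀ t ∈ Set.Ioo 0 r, h t / (t * h' t) ≤ s)
    (hinv_mem : ∀ x ∈ Set.Icc 0 (h r), hinv x ∈ Set.Icc 0 r)
    (hinv_eq : ∀ x ∈ Set.Icc 0 (h r), h (hinv x) = x)
    (hinv_eq' : ∀ t ∈ Set.Icc 0 r, hinv (h t) = t) :
    MonotoneOn (fun x => x * Real.log (B * Real.exp s / hinv x)) (Set.Icc 0 (h r)) :=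
  stmt_2_general r B hr hrB h h' hinv s hcont h0 hmono hderiv hpos hsup hinv_mem hinv_eq
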